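/- Minimax identity for the privacy-amplification exponent: let β ∈ (0,1) and R ≥ 0. Then max_{α ∈ [β,1]} (β(1−α)/(α(1−β))) · ( R − H̃_{α,β}(X|Y)_{P_XY} ) = min over probability distributions Q_XY on 𝒳×𝒴 that are absolutely continuous with respect to P_XY of ( D(Q_Y‖P_Y) + (β/(1−β)) · D(Q_XY‖P_XY) + max{ R − H(X|Y)_{Q_XY}, 0 } ), where Q_Y is the marginal of Q_XY on 𝒴 (at α = 1 the left-hand term is 0). -/
import Mathlib


open scoped BigOperators

noncomputable section

variable {𝓧 𝓨 : Type*} [Fintype 𝓧] [Fintype 𝓨]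

/-- Marginal distribution of the second component. -/
def pY (P : 𝓧 × 𝓨 → ℝ) (y : 𝓨) : ℝ := ∑ x, P (x, y)

/-- Conditional distribution `P_{X|Y}(x|y)`. -/
def pCond (P : 𝓧 × 𝓨 → ℝ) (x : 𝓧) (y : 𝓨) : ℝ := P (x, y) / pY P y

/-- Two-parameter Rényi conditional entropy `H̃_{α,β}(X|Y)` for `α ≠ 1`. -/
def Htilde (P : 𝓧 × 𝓨 → ℝ) (α β : ℝ) : ℝ :=
  α / (β * (1 - α)) *
    Real.logb 2 (∑ y, if 0 < pY P y then
      pY P y * (∑ x, pCond P x y ^ α) ^ (β / α) else 0)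

/-- Shannon conditional entropy `H(X|Y)`. -/
def shannonCond (P : 𝓧 × 𝓨 → ℝ) : ℝ :=
  -∑ p, if 0 < P p then P p * Real.logb 2 (pCond P p.1 p.2) else 0

/-- Two-parameter Rényi conditional entropy, continuously extended at `α = 1`. -/
def HtildeE (P : 𝓧 × 𝓨 → ℝ) (α β : ℝ) : ℝ :=
  if α = 1 then shannonCond P else Htilde P α β

/-- Relative entropy `D(Q‖P)` (for `Q` absolutely continuous w.r.t. `P`). -/
def relEnt {𝓩 : Type*} [Fintype 𝓩] (Q P : 𝓩 → ℝ) : ℝ :=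
  ∑ z, if 0 < Q z then Q z * Real.logb 2 (Q z / P z) else 0

set_option linter.unusedSectionVars false
set_option linter.unusedVariables false
set_option maxHeartbeats 1000000



/-- `logb` of an `rpow`. -/
lemma logb_rpow' {x : ℝ} (hx : 0 < x) (y : ℝ) :
    Real.logb 2 (x ^ y) = y * Real.logb 2 x := by
  rw [Real.logb, Real.logb, Real.log_rpow hx, mul_div_assoc]

/-- Gibbs' inequality / nonnegativity of relative entropy, unnormalized version. -/
lemma gibbs {ι : Type*} [Fintype ι] (q w : ι → ℝ)
    (hq : ∀ i, 0 ≤ q i) (hw : ∀ i, 0 ≤ w i) (hqs : ∑ i, q i = 1)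
    (habs : ∀ i, 0 < q i → 0 < w i) (hws : 0 < ∑ i, w i) :
    -Real.logb 2 (∑ i, w i) ≤ ∑ i, (if 0 < q i then q i * Real.logb 2 (q i / w i) else 0) := by
  have hlog2 : (0:ℝ) < Real.log 2 := Real.log_pos (by norm_num)
  set S := ∑ i, w i with hS
  -- log version
  have key : -Real.log S ≤ ∑ i, (if 0 < q i then q i * Real.log (q i / w i) else 0) := by
    have hterm : ∀ i, q i - w i / S - q i * Real.log S ≤
        (if 0 < q i then q i * Real.log (q i / w i) else 0) := by
      intro i
      by_cases h : 0 < q i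
      · have hwi := habs i h
        have h1 : Real.log (w i / (q i * S)) ≤ w i / (q i * S) - 1 :=
          Real.log_le_sub_one_of_pos (by positivity)
        have h2 : Real.log (w i / (q i * S)) = Real.log (w i) - Real.log (q i) - Real.log S := by
          rw [Real.log_div (by positivity) (by positivity), Real.log_mul (ne_of_gt h) (ne_of_gt hws)]
          ring
        have h3 : Real.log (q i / w i) = Real.log (q i) - Real.log (w i) := by
          rw [Real.log_div (ne_of_gt h) (ne_of_gt hwi)]
        rw [if_pos h, h3]
        have h4 : Real.log (w i) - Real.log (q i) - Real.log S ≤ w i / (q i * S) - 1 := by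
          rw [← h2]; exact h1
        have h5 : q i * (Real.log (w i) - Real.log (q i) - Real.log S) ≤
            q i * (w i / (q i * S) - 1) := mul_le_mul_of_nonneg_left h4 (le_of_lt h)
        have h6 : q i * (w i / (q i * S)) = w i / S := by
          field_simp
        nlinarith [h5, h6]
      · rw [if_neg h]
        have hq0 : q i = 0 := le_antisymm (not_lt.mp h) (hq i)
        have : 0 ≤ w i / S := div_nonneg (hw i) (le_of_lt hws)
        rw [hq0]; simp; linarith
    calc -Real.log S = (∑ i, q i) - (∑ i, w i) / S - (∑ i, q i) * Real.log S := by
          rw [hqs, ← hS, div_self (ne_of_gt hws)]; ring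
      _ = ∑ i, (q i - w i / S - q i * Real.log S) := by
          rw [Finset.sum_sub_distrib, Finset.sum_sub_distrib, ← Finset.sum_div, ← Finset.sum_mul]
      _ ≤ _ := Finset.sum_le_sum (fun i _ => hterm i)
  -- convert to logb
  have h1 : -Real.logb 2 S = (-Real.log S) / Real.log 2 := by
    rw [Real.logb]; ring
  rw [h1]
  have h2 : ∑ i, (if 0 < q i then q i * Real.logb 2 (q i / w i) else 0) =
      (∑ i, (if 0 < q i then q i * Real.log (q i / w i) else 0)) / Real.log 2 := by
    rw [Finset.sum_div]
    refine Finset.sum_congr rfl (fun i _ => ?_)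
    by_cases h : 0 < q i
    · rw [if_pos h, if_pos h, Real.logb, mul_div_assoc]
    · rw [if_neg h, if_neg h, zero_div]
  rw [h2]
  exact div_le_div_of_nonneg_right key hlog2.le


def Zf (P : 𝓧 × 𝓨 → ℝ) (α : ℝ) (y : 𝓨) : ℝ := ∑ x, pCond P x y ^ α
def Wf (P : 𝓧 × 𝓨 → ℝ) (β α : ℝ) (y : 𝓨) : ℝ := pY P y * Zf P α y ^ (β / α)
def Sf (P : 𝓧 × 𝓨 → ℝ) (β α : ℝ) : ℝ := ∑ y, if 0 < pY P y then Wf P β α y else 0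
def Qst (P : 𝓧 × 𝓨 → ℝ) (β α : ℝ) (p : 𝓧 × 𝓨) : ℝ :=
  if 0 < pY P p.2 then
    pY P p.2 * Zf P α p.2 ^ (β / α - 1) * pCond P p.1 p.2 ^ α / Sf P β α else 0
def phihat (P : 𝓧 × 𝓨 → ℝ) (β R α : ℝ) : ℝ :=
  β * (1 - α) / (α * (1 - β)) * R - 1 / (1 - β) * Real.logb 2 (Sf P β α)

section Basic
variable (P : 𝓧 × 𝓨 → ℝ)

lemma exists_pos_of_sum_pos {ι : Type*} [Fintype ι] {f : ι → ℝ}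
    (h : 0 < ∑ i, f i) : ∃ i, 0 < f i := by
  by_contra hc
  push_neg at hc
  have : ∑ i, f i ≤ 0 := Finset.sum_nonpos (fun i _ => hc i)
  linarith

lemma pY_nonneg (hP : ∀ p, 0 ≤ P p) (y : 𝓨) : 0 ≤ pY P y :=
  Finset.sum_nonneg (fun x _ => hP (x, y))

lemma pY_pos (hP : ∀ p, 0 ≤ P p) {x : 𝓧} {y : 𝓨} (h : 0 < P (x, y)) : 0 < pY P y :=
  lt_of_lt_of_le h (Finset.single_le_sum (fun x _ => hP (x, y)) (Finset.mem_univ x))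

lemma P_eq_zero_of_pY (hP : ∀ p, 0 ≤ P p) {y : 𝓨} (h : ¬ 0 < pY P y) (x : 𝓧) : P (x, y) = 0 := by
  by_contra hc
  exact h (pY_pos P hP (lt_of_le_of_ne (hP (x,y)) (Ne.symm hc)))

lemma sum_pY (Q : 𝓧 × 𝓨 → ℝ) : ∑ y, pY Q y = ∑ p, Q p :=
  (Fintype.sum_prod_type_right Q).symm

lemma pCond_nonneg (hP : ∀ p, 0 ≤ P p) (x : 𝓧) (y : 𝓨) : 0 ≤ pCond P x y :=
  div_nonneg (hP (x, y)) (pY_nonneg P hP y)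

lemma pCond_pos (hP : ∀ p, 0 ≤ P p) {x : 𝓧} {y : 𝓨} (h : 0 < P (x, y)) : 0 < pCond P x y :=
  div_pos h (pY_pos P hP h)

lemma sum_pCond {y : 𝓨} (h : 0 < pY P y) : ∑ x, pCond P x y = 1 := by
  unfold pCond
  rw [← Finset.sum_div]
  exact div_self (ne_of_gt h)

lemma Zf_nonneg (hP : ∀ p, 0 ≤ P p) (α : ℝ) (y : 𝓨) : 0 ≤ Zf P α y :=
  Finset.sum_nonneg (fun x _ => Real.rpow_nonneg (pCond_nonneg P hP x y) α)

lemma Zf_pos (hP : ∀ p, 0 ≤ P p) (α : ℝ) {y : 𝓨} (h : 0 < pY P y) : 0 < Zf P α y := by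
  obtain ⟨x, hx⟩ := exists_pos_of_sum_pos (f := fun x => P (x, y)) h
  exact Finset.sum_pos' (fun x _ => Real.rpow_nonneg (pCond_nonneg P hP x y) α)
    ⟨x, Finset.mem_univ x, Real.rpow_pos_of_pos (pCond_pos P hP hx) α⟩

lemma Wf_pos (hP : ∀ p, 0 ≤ P p) (β α : ℝ) {y : 𝓨} (h : 0 < pY P y) : 0 < Wf P β α y :=
  mul_pos h (Real.rpow_pos_of_pos (Zf_pos P hP α h) _)

lemma exists_pY_pos (hP : ∀ p, 0 ≤ P p) (hPsum : ∑ p, P p = 1) : ∃ y, 0 < pY P y := by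
  apply exists_pos_of_sum_pos
  rw [sum_pY, hPsum]; norm_num

lemma Sf_pos (hP : ∀ p, 0 ≤ P p) (hPsum : ∑ p, P p = 1) (β α : ℝ) : 0 < Sf P β α := by
  obtain ⟨y, hy⟩ := exists_pY_pos P hP hPsum
  refine Finset.sum_pos' (fun y _ => ?_) ⟨y, Finset.mem_univ y, ?_⟩
  · by_cases h : 0 < pY P y
    · rw [if_pos h]; exact (Wf_pos P hP β α h).le
    · rw [if_neg h]
  · rw [if_pos hy]; exact Wf_pos P hP β α hy

lemma marg (Q : 𝓧 × 𝓨 → ℝ) (hQ : ∀ p, 0 ≤ Q p) (G : 𝓨 → ℝ) :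
    ∑ y, (if 0 < pY Q y then pY Q y * G y else 0)
      = ∑ p : 𝓧 × 𝓨, (if 0 < Q p then Q p * G p.2 else 0) := by
  rw [Fintype.sum_prod_type_right]
  refine Finset.sum_congr rfl (fun y _ => ?_)
  by_cases h : 0 < pY Q y
  · rw [if_pos h]
    have : ∀ x : 𝓧, (if 0 < Q (x, y) then Q (x, y) * G y else 0) = Q (x, y) * G y := by
      intro x
      by_cases hx : 0 < Q (x, y)
      · rw [if_pos hx]
      · rw [if_neg hx, le_antisymm (not_lt.mp hx) (hQ (x,y)), zero_mul]
    calc pY Q y * G y = (∑ x, Q (x, y)) * G y := rfl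
      _ = ∑ x, Q (x, y) * G y := by rw [Finset.sum_mul]
      _ = ∑ x, (if 0 < Q (x, y) then Q (x, y) * G y else 0) := by
          exact (Finset.sum_congr rfl (fun x _ => (this x).symm))
  · rw [if_neg h]
    symm
    refine Finset.sum_eq_zero (fun x _ => ?_)
    rw [if_neg]
    rw [P_eq_zero_of_pY Q hQ h x]
    norm_num


variable (P : 𝓧 × 𝓨 → ℝ)

lemma bracket {β α : ℝ} (hβ0 : 0 < β) (hβ1 : β < 1) (hα0 : 0 < α)
    {q qy py pc z : ℝ} (hq : 0 < q) (hqy : 0 < qy) (hpy : 0 < py) (hpc : 0 < pc) (hz : 0 < z) :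
    Real.logb 2 (qy / py) + β / (1 - β) * Real.logb 2 (q / (py * pc))
      + β * (1 - α) / (α * (1 - β)) * Real.logb 2 (q / qy)
    = 1 / (1 - β) * Real.logb 2 (qy / (py * z ^ (β / α)))
      + β / (α * (1 - β)) * Real.logb 2 (q / (qy * (pc ^ α / z))) := by
  have hzr : (0:ℝ) < z ^ (β / α) := Real.rpow_pos_of_pos hz _
  have hpcr : (0:ℝ) < pc ^ α := Real.rpow_pos_of_pos hpc _
  rw [Real.logb_div hq.ne' hqy.ne', Real.logb_div hqy.ne' hpy.ne',
      Real.logb_div hq.ne' (by positivity : (py * pc) ≠ 0),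
      Real.logb_mul hpy.ne' hpc.ne',
      Real.logb_div hqy.ne' (by positivity : (py * z ^ (β / α)) ≠ 0),
      Real.logb_mul hpy.ne' hzr.ne',
      Real.logb_div hq.ne' (by positivity : (qy * (pc ^ α / z)) ≠ 0),
      Real.logb_mul hqy.ne' (by positivity : (pc ^ α / z) ≠ 0),
      Real.logb_div hpcr.ne' hz.ne', logb_rpow' hz, logb_rpow' hpc]
  have h1 : α ≠ 0 := hα0.ne'
  have h2 : (1:ℝ) - β ≠ 0 := by intro h; nlinarith
  field_simp
  ring

lemma decomp (hP : ∀ p, 0 ≤ P p) (Q : 𝓧 × 𝓨 → ℝ)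
    (hQ0 : ∀ p, 0 ≤ Q p) (hQa : ∀ p, P p = 0 → Q p = 0)
    {β α : ℝ} (hβ0 : 0 < β) (hβ1 : β < 1) (hα0 : 0 < α) :
    relEnt (pY Q) (pY P) + β / (1 - β) * relEnt Q P
      - β * (1 - α) / (α * (1 - β)) * shannonCond Q
    = 1 / (1 - β) *
        (∑ y, if 0 < pY Q y then pY Q y * Real.logb 2 (pY Q y / Wf P β α y) else 0)
      + β / (α * (1 - β)) *
        (∑ p : 𝓧 × 𝓨, if 0 < Q p then
          Q p * Real.logb 2 (Q p / (pY Q p.2 * (pCond P p.1 p.2 ^ α / Zf P α p.2))) else 0) := by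
  have hQP : ∀ p, 0 < Q p → 0 < P p := by
    intro p hp
    rcases lt_or_eq_of_le (hP p) with h | h
    · exact h
    · exact absurd (hQa p h.symm) (ne_of_gt hp)
  have key : ∀ p : 𝓧 × 𝓨,
      (if 0 < Q p then Q p * Real.logb 2 (pY Q p.2 / pY P p.2) else 0)
      + β / (1 - β) * (if 0 < Q p then Q p * Real.logb 2 (Q p / P p) else 0)
      + β * (1 - α) / (α * (1 - β)) *
          (if 0 < Q p then Q p * Real.logb 2 (pCond Q p.1 p.2) else 0)
      = 1 / (1 - β) * (if 0 < Q p then Q p * Real.logb 2 (pY Q p.2 / Wf P β α p.2) else 0)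
      + β / (α * (1 - β)) * (if 0 < Q p then
          Q p * Real.logb 2 (Q p / (pY Q p.2 * (pCond P p.1 p.2 ^ α / Zf P α p.2))) else 0) := by
    intro p
    by_cases hp : 0 < Q p
    · rw [if_pos hp, if_pos hp, if_pos hp, if_pos hp, if_pos hp]
      have hp' : 0 < Q (p.1, p.2) := by rwa [Prod.mk.eta]
      have hPp : 0 < P p := hQP p hp
      have hPp' : 0 < P (p.1, p.2) := by rwa [Prod.mk.eta]
      have hqy : 0 < pY Q p.2 := pY_pos Q hQ0 hp'
      have hpy : 0 < pY P p.2 := pY_pos P hP hPp'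
      have hpc : 0 < pCond P p.1 p.2 := pCond_pos P hP hPp'
      have hz : 0 < Zf P α p.2 := Zf_pos P hP α hpy
      have hPfac : P p = pY P p.2 * pCond P p.1 p.2 := by
        rw [pCond, Prod.mk.eta]
        field_simp
      have hpCQ : pCond Q p.1 p.2 = Q p / pY Q p.2 := by
        rw [pCond, Prod.mk.eta]
      rw [hpCQ, hPfac, Wf]
      have hb := bracket (β := β) (α := α) hβ0 hβ1 hα0 hp hqy hpy hpc hz
      linear_combination Q p * hb
    · rw [if_neg hp, if_neg hp, if_neg hp, if_neg hp, if_neg hp]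
      ring
  have hrel : relEnt (pY Q) (pY P)
      = ∑ p : 𝓧 × 𝓨, (if 0 < Q p then Q p * Real.logb 2 (pY Q p.2 / pY P p.2) else 0) := by
    rw [relEnt]
    exact marg Q hQ0 (fun y => Real.logb 2 (pY Q y / pY P y))
  have hA : (∑ y, if 0 < pY Q y then pY Q y * Real.logb 2 (pY Q y / Wf P β α y) else 0)
      = ∑ p : 𝓧 × 𝓨, (if 0 < Q p then Q p * Real.logb 2 (pY Q p.2 / Wf P β α p.2) else 0) :=
    marg Q hQ0 (fun y => Real.logb 2 (pY Q y / Wf P β α y))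
  rw [hrel, hA, relEnt, shannonCond]
  simp only [Finset.mul_sum, mul_neg, sub_neg_eq_add, ← Finset.sum_add_distrib]
  exact Finset.sum_congr rfl (fun p _ => key p)

lemma key_ineq (hP : ∀ p, 0 ≤ P p) (hPsum : ∑ p, P p = 1)
    (Q : 𝓧 × 𝓨 → ℝ) (hQ0 : ∀ p, 0 ≤ Q p) (hQ1 : ∑ p, Q p = 1)
    (hQa : ∀ p, P p = 0 → Q p = 0)
    {β R α : ℝ} (hβ0 : 0 < β) (hβ1 : β < 1) (hα1 : β ≤ α) (hα2 : α ≤ 1) :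
    phihat P β R α ≤ relEnt (pY Q) (pY P) + β / (1 - β) * relEnt Q P
      + β * (1 - α) / (α * (1 - β)) * (R - shannonCond Q) := by
  have hα0 : 0 < α := lt_of_lt_of_le hβ0 hα1
  have h1β : (0:ℝ) < 1 - β := by linarith
  have hQP : ∀ p, 0 < Q p → 0 < P p := by
    intro p hp
    rcases lt_or_eq_of_le (hP p) with h | h
    · exact h
    · exact absurd (hQa p h.symm) (ne_of_gt hp)
  have hpYQP : ∀ y, 0 < pY Q y → 0 < pY P y := by
    intro y hy
    obtain ⟨x, hx⟩ := exists_pos_of_sum_pos (f := fun x => Q (x, y)) hy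
    exact pY_pos P hP (hQP (x, y) hx)
  -- the A term
  have hSpos := Sf_pos P hP hPsum β α
  have hAineq : -Real.logb 2 (Sf P β α)
      ≤ ∑ y, (if 0 < pY Q y then pY Q y * Real.logb 2 (pY Q y / Wf P β α y) else 0) := by
    have hg := gibbs (pY Q) (fun y => if 0 < pY P y then Wf P β α y else 0)
      (pY_nonneg Q hQ0)
      (fun y => by
        by_cases h : 0 < pY P y
        · rw [if_pos h]; exact (Wf_pos P hP β α h).le
        · rw [if_neg h])
      (by rw [sum_pY]; exact hQ1)
      (fun y hy => by
        rw [if_pos (hpYQP y hy)]; exact Wf_pos P hP β α (hpYQP y hy))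
      (by exact hSpos)
    have : (∑ y, (if 0 < pY Q y then
        pY Q y * Real.logb 2 (pY Q y / (if 0 < pY P y then Wf P β α y else 0)) else 0))
        = ∑ y, (if 0 < pY Q y then pY Q y * Real.logb 2 (pY Q y / Wf P β α y) else 0) := by
      refine Finset.sum_congr rfl (fun y _ => ?_)
      by_cases h : 0 < pY Q y
      · rw [if_pos h, if_pos h, if_pos (hpYQP y h)]
      · rw [if_neg h, if_neg h]
    rw [this] at hg
    exact hg
  -- the B term
  have hBineq : 0 ≤ ∑ p : 𝓧 × 𝓨, (if 0 < Q p then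
      Q p * Real.logb 2 (Q p / (pY Q p.2 * (pCond P p.1 p.2 ^ α / Zf P α p.2))) else 0) := by
    rw [Fintype.sum_prod_type_right]
    refine Finset.sum_nonneg (fun y _ => ?_)
    by_cases hy : 0 < pY Q y
    · have hpy : 0 < pY P y := hpYQP y hy
      have hz : 0 < Zf P α y := Zf_pos P hP α hpy
      have hg := gibbs (fun x => Q (x, y) / pY Q y)
        (fun x => pCond P x y ^ α / Zf P α y)
        (fun x => div_nonneg (hQ0 (x, y)) hy.le)
        (fun x => div_nonneg (Real.rpow_nonneg (pCond_nonneg P hP x y) α) hz.le)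
        (by rw [← Finset.sum_div]; exact div_self hy.ne')
        (fun x hx => by
          have hQx : 0 < Q (x, y) := by
            by_contra hc
            rw [le_antisymm (not_lt.mp hc) (hQ0 (x,y))] at hx
            simp at hx
          exact div_pos (Real.rpow_pos_of_pos (pCond_pos P hP (hQP (x,y) hQx)) α) hz)
        (by rw [← Finset.sum_div]; exact div_pos (Zf_pos P hP α hpy) hz)
      have hsum1 : (∑ x, pCond P x y ^ α / Zf P α y) = 1 := by
        rw [← Finset.sum_div]; exact div_self hz.ne'
      rw [hsum1, Real.logb_one, neg_zero] at hg
      have heq : ∀ x : 𝓧, (if 0 < Q (x, y) then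
          Q (x, y) * Real.logb 2 (Q (x, y) / (pY Q y * (pCond P x y ^ α / Zf P α y))) else 0)
          = pY Q y * (if 0 < Q (x, y) / pY Q y then
              (Q (x, y) / pY Q y) * Real.logb 2
                ((Q (x, y) / pY Q y) / (pCond P x y ^ α / Zf P α y)) else 0) := by
        intro x
        have hiff : (0 < Q (x, y)) ↔ (0 < Q (x, y) / pY Q y) :=
          ⟨fun h => div_pos h hy, fun h => by
            have h2 := mul_pos h hy
            rwa [div_mul_cancel₀ _ hy.ne'] at h2⟩
        by_cases hx : 0 < Q (x, y)
        · rw [if_pos hx, if_pos (hiff.mp hx)]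
          rw [show Q (x, y) / (pY Q y * (pCond P x y ^ α / Zf P α y))
              = (Q (x, y) / pY Q y) / (pCond P x y ^ α / Zf P α y) from by
            rw [div_div]]
          field_simp
        · rw [if_neg hx, if_neg (fun h => hx (hiff.mpr h)), mul_zero]
      calc (0:ℝ) = pY Q y * 0 := by ring
        _ ≤ pY Q y * ∑ x, (if 0 < Q (x, y) / pY Q y then
              (Q (x, y) / pY Q y) * Real.logb 2
                ((Q (x, y) / pY Q y) / (pCond P x y ^ α / Zf P α y)) else 0) :=
            mul_le_mul_of_nonneg_left hg hy.le
        _ = ∑ x, (if 0 < Q (x, y) then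
            Q (x, y) * Real.logb 2 (Q (x, y) / (pY Q y * (pCond P x y ^ α / Zf P α y))) else 0) := by
            rw [Finset.mul_sum]
            exact Finset.sum_congr rfl (fun x _ => (heq x).symm)
    · refine Finset.sum_nonneg (fun x _ => ?_)
      rw [if_neg]
      rw [P_eq_zero_of_pY Q hQ0 hy x]
      norm_num
  have hdec := decomp P hP Q hQ0 hQa hβ0 hβ1 hα0
  have hco : (0:ℝ) < β / (α * (1 - β)) := by positivity
  have h1 : 1 / (1 - β) * (-Real.logb 2 (Sf P β α))
      ≤ 1 / (1 - β) * (∑ y, if 0 < pY Q y then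
        pY Q y * Real.logb 2 (pY Q y / Wf P β α y) else 0) :=
    mul_le_mul_of_nonneg_left hAineq (by positivity)
  have h2 : (0:ℝ) ≤ β / (α * (1 - β)) * (∑ p : 𝓧 × 𝓨, if 0 < Q p then
      Q p * Real.logb 2 (Q p / (pY Q p.2 * (pCond P p.1 p.2 ^ α / Zf P α p.2))) else 0) :=
    mul_nonneg hco.le hBineq
  have hexp : relEnt (pY Q) (pY P) + β / (1 - β) * relEnt Q P
      + β * (1 - α) / (α * (1 - β)) * (R - shannonCond Q)
      = (relEnt (pY Q) (pY P) + β / (1 - β) * relEnt Q P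
        - β * (1 - α) / (α * (1 - β)) * shannonCond Q)
        + β * (1 - α) / (α * (1 - β)) * R := by ring
  rw [hexp, hdec, phihat]
  linarith

variable {β α : ℝ}

lemma Qst_nonneg (hP : ∀ p, 0 ≤ P p) (hPsum : ∑ p, P p = 1) (hβ0 : 0 < β) (hβ1 : β < 1) (p : 𝓧 × 𝓨) : 0 ≤ Qst P β α p := by
  rw [Qst]
  by_cases h : 0 < pY P p.2
  · rw [if_pos h]
    have h1 := Real.rpow_nonneg (Zf_nonneg P hP α p.2) (β / α - 1)
    have h2 := Real.rpow_nonneg (pCond_nonneg P hP p.1 p.2) α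
    have h3 := (Sf_pos P hP hPsum β α).le
    positivity
  · rw [if_neg h]

lemma Qst_abs (hP : ∀ p, 0 ≤ P p) (hα0 : 0 < α) (p : 𝓧 × 𝓨) (hp : P p = 0) : Qst P β α p = 0 := by
  rw [Qst]
  by_cases h : 0 < pY P p.2
  · rw [if_pos h]
    have : pCond P p.1 p.2 = 0 := by rw [pCond, Prod.mk.eta, hp, zero_div]
    rw [this, Real.zero_rpow hα0.ne', mul_zero, zero_div]
  · rw [if_neg h]

lemma Qst_pos_iff (hP : ∀ p, 0 ≤ P p) (hPsum : ∑ p, P p = 1) (hβ0 : 0 < β) (hβ1 : β < 1) (hα0 : 0 < α) (p : 𝓧 × 𝓨) :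
    0 < Qst P β α p ↔ 0 < P p := by
  constructor
  · intro h
    rcases lt_or_eq_of_le (hP p) with h' | h'
    · exact h'
    · rw [Qst_abs P hP hα0 p h'.symm] at h; exact absurd h (lt_irrefl 0)
  · intro h
    have h' : 0 < P (p.1, p.2) := by rwa [Prod.mk.eta]
    have hpy : 0 < pY P p.2 := pY_pos P hP h'
    rw [Qst, if_pos hpy]
    have h1 := Real.rpow_pos_of_pos (Zf_pos P hP α hpy) (β / α - 1)
    have h2 := Real.rpow_pos_of_pos (pCond_pos P hP h') α
    have h3 := Sf_pos P hP hPsum β α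
    positivity

lemma Zf_rpow_succ {y : 𝓨} (hz : 0 < Zf P α y) : Zf P α y ^ (β / α - 1) * Zf P α y = Zf P α y ^ (β / α) := by
  rw [← Real.rpow_add_one hz.ne' (β / α - 1)]
  norm_num

lemma pY_Qst (hP : ∀ p, 0 ≤ P p) (hβ0 : 0 < β) (hβ1 : β < 1) (hα0 : 0 < α) (y : 𝓨) :
    pY (Qst P β α) y = if 0 < pY P y then Wf P β α y / Sf P β α else 0 := by
  by_cases h : 0 < pY P y
  · rw [if_pos h, pY]
    have hz := Zf_pos P hP α h
    calc ∑ x, Qst P β α (x, y)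
        = ∑ x, pY P y * Zf P α y ^ (β / α - 1) * pCond P x y ^ α / Sf P β α := by
          refine Finset.sum_congr rfl (fun x _ => ?_)
          rw [Qst, if_pos h]
      _ = pY P y * Zf P α y ^ (β / α - 1) * (∑ x, pCond P x y ^ α) / Sf P β α := by
          rw [← Finset.sum_div, ← Finset.mul_sum]
      _ = Wf P β α y / Sf P β α := by
          rw [show (∑ x, pCond P x y ^ α) = Zf P α y from rfl, Wf,
            mul_assoc, Zf_rpow_succ P hz]
  · rw [if_neg h, pY]
    refine Finset.sum_eq_zero (fun x _ => ?_)
    rw [Qst, if_neg h]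

lemma sum_Qst (hP : ∀ p, 0 ≤ P p) (hPsum : ∑ p, P p = 1) (hβ0 : 0 < β) (hβ1 : β < 1) (hα0 : 0 < α) :
    ∑ p, Qst P β α p = 1 := by
  rw [← sum_pY]
  have : ∀ y : 𝓨, pY (Qst P β α) y = (if 0 < pY P y then Wf P β α y else 0) / Sf P β α := by
    intro y
    rw [pY_Qst P hP hβ0 hβ1 hα0]
    by_cases h : 0 < pY P y
    · rw [if_pos h, if_pos h]
    · rw [if_neg h, if_neg h, zero_div]
  rw [Finset.sum_congr rfl (fun y _ => this y), ← Finset.sum_div]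
  exact div_self (Sf_pos P hP hPsum β α).ne'

lemma pY_Qst_pos_iff (hP : ∀ p, 0 ≤ P p) (hPsum : ∑ p, P p = 1) (hβ0 : 0 < β) (hβ1 : β < 1) (hα0 : 0 < α) (y : 𝓨) :
    0 < pY (Qst P β α) y ↔ 0 < pY P y := by
  rw [pY_Qst P hP hβ0 hβ1 hα0]
  by_cases h : 0 < pY P y
  · rw [if_pos h]
    simp only [h, iff_true]
    exact div_pos (Wf_pos P hP β α h) (Sf_pos P hP hPsum β α)
  · rw [if_neg h]
    simp [h]


lemma key_eq (hP : ∀ p, 0 ≤ P p) (hPsum : ∑ p, P p = 1)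
    {β R α : ℝ} (hβ0 : 0 < β) (hβ1 : β < 1) (hα0 : 0 < α) :
    relEnt (pY (Qst P β α)) (pY P) + β / (1 - β) * relEnt (Qst P β α) P
      + β * (1 - α) / (α * (1 - β)) * (R - shannonCond (Qst P β α))
    = phihat P β R α := by
  have hSpos := Sf_pos P hP hPsum β α
  have hdec := decomp P hP (Qst P β α) (Qst_nonneg P hP hPsum hβ0 hβ1)
    (Qst_abs P hP hα0) hβ0 hβ1 hα0
  have hA : (∑ y, if 0 < pY (Qst P β α) y then
      pY (Qst P β α) y * Real.logb 2 (pY (Qst P β α) y / Wf P β α y) else 0)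
      = -Real.logb 2 (Sf P β α) := by
    have hterm : ∀ y : 𝓨, (if 0 < pY (Qst P β α) y then
        pY (Qst P β α) y * Real.logb 2 (pY (Qst P β α) y / Wf P β α y) else 0)
        = pY (Qst P β α) y * (-Real.logb 2 (Sf P β α)) := by
      intro y
      by_cases h : 0 < pY (Qst P β α) y
      · rw [if_pos h]
        have hpy : 0 < pY P y := (pY_Qst_pos_iff P hP hPsum hβ0 hβ1 hα0 y).mp h
        have hW : 0 < Wf P β α y := Wf_pos P hP β α hpy
        have hval : pY (Qst P β α) y = Wf P β α y / Sf P β α := by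
          rw [pY_Qst P hP hβ0 hβ1 hα0, if_pos hpy]
        have hdivW : pY (Qst P β α) y / Wf P β α y = (Sf P β α)⁻¹ := by
          rw [hval]
          field_simp
        rw [hdivW, Real.logb_inv]
      · rw [if_neg h]
        have : pY (Qst P β α) y = 0 := by
          have h0 := pY_nonneg (Qst P β α) (Qst_nonneg P hP hPsum hβ0 hβ1) y
          linarith [lt_or_eq_of_le h0, not_lt.mp h]
        rw [this, zero_mul]
    rw [Finset.sum_congr rfl (fun y _ => hterm y), ← Finset.sum_mul, sum_pY,
      sum_Qst P hP hPsum hβ0 hβ1 hα0, one_mul]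
  have hB : (∑ p : 𝓧 × 𝓨, if 0 < Qst P β α p then
      Qst P β α p * Real.logb 2 (Qst P β α p /
        (pY (Qst P β α) p.2 * (pCond P p.1 p.2 ^ α / Zf P α p.2))) else 0) = 0 := by
    refine Finset.sum_eq_zero (fun p _ => ?_)
    by_cases h : 0 < Qst P β α p
    · rw [if_pos h]
      have hPp : 0 < P p := (Qst_pos_iff P hP hPsum hβ0 hβ1 hα0 p).mp h
      have hPp' : 0 < P (p.1, p.2) := by rwa [Prod.mk.eta]
      have hpy : 0 < pY P p.2 := pY_pos P hP hPp'
      have hz : 0 < Zf P α p.2 := Zf_pos P hP α hpy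
      have hpc : 0 < pCond P p.1 p.2 := pCond_pos P hP hPp'
      have hratio : Qst P β α p /
          (pY (Qst P β α) p.2 * (pCond P p.1 p.2 ^ α / Zf P α p.2)) = 1 := by
        rw [pY_Qst P hP hβ0 hβ1 hα0, if_pos hpy, Qst, if_pos hpy, Wf]
        rw [div_eq_one_iff_eq]
        · rw [← Zf_rpow_succ P hz]
          field_simp
        · have h1 := Real.rpow_pos_of_pos hz (β / α)
          have h2 := Real.rpow_pos_of_pos hpc α
          positivity
      rw [hratio, Real.logb_one, mul_zero]
    · rw [if_neg h]
  rw [show relEnt (pY (Qst P β α)) (pY P) + β / (1 - β) * relEnt (Qst P β α) P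
      + β * (1 - α) / (α * (1 - β)) * (R - shannonCond (Qst P β α))
      = (relEnt (pY (Qst P β α)) (pY P) + β / (1 - β) * relEnt (Qst P β α) P
        - β * (1 - α) / (α * (1 - β)) * shannonCond (Qst P β α))
        + β * (1 - α) / (α * (1 - β)) * R from by ring, hdec, hA, hB, phihat]
  ring

lemma Sf_one (hP : ∀ p, 0 ≤ P p) (hPsum : ∑ p, P p = 1) (β : ℝ) : Sf P β 1 = 1 := by
  rw [Sf]
  have hterm : ∀ y : 𝓨, (if 0 < pY P y then Wf P β 1 y else 0) = pY P y := by
    intro y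
    by_cases h : 0 < pY P y
    · rw [if_pos h, Wf]
      have hz : Zf P 1 y = 1 := by
        rw [Zf, Finset.sum_congr rfl (fun x _ => Real.rpow_one (pCond P x y))]
        exact sum_pCond P h
      rw [hz, Real.one_rpow, mul_one]
    · rw [if_neg h]
      exact (le_antisymm (not_lt.mp h) (pY_nonneg P hP y)).symm
  rw [Finset.sum_congr rfl (fun y _ => hterm y), sum_pY, hPsum]

lemma ident (hP : ∀ p, 0 ≤ P p) (hPsum : ∑ p, P p = 1)
    {β R α : ℝ} (hβ0 : 0 < β) (hβ1 : β < 1) (hα1 : β ≤ α) (hα2 : α ≤ 1) :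
    β * (1 - α) / (α * (1 - β)) * (R - HtildeE P α β) = phihat P β R α := by
  by_cases h : α = 1
  · subst h
    rw [HtildeE, if_pos rfl, phihat, Sf_one P hP hPsum β, Real.logb_one]
    ring
  · rw [HtildeE, if_neg h, Htilde]
    have hS : (∑ y, if 0 < pY P y then
        pY P y * (∑ x, pCond P x y ^ α) ^ (β / α) else 0) = Sf P β α := rfl
    rw [hS, phihat]
    have hα0 : 0 < α := lt_of_lt_of_le hβ0 hα1
    have h1α : 1 - α ≠ 0 := fun hc => h (by linarith)
    have h1β : (1:ℝ) - β ≠ 0 := by intro hc; linarith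
    field_simp

lemma sfun_lt {β : ℝ} (hβ0 : 0 < β) (hβ1 : β < 1) {a b : ℝ} (ha : 0 < a) (hab : a < b) :
    β * (1 - b) / (b * (1 - β)) < β * (1 - a) / (a * (1 - β)) := by
  have h1β : (0:ℝ) < 1 - β := by linarith
  have hb : 0 < b := lt_trans ha hab
  rw [div_lt_div_iff₀ (by positivity) (by positivity)]
  nlinarith [mul_pos hβ0 h1β, mul_pos (mul_pos hβ0 h1β) (sub_pos.mpr hab)]

lemma sfun_nonneg {β α : ℝ} (hβ0 : 0 < β) (hβ1 : β < 1) (hα0 : 0 < α) (hα2 : α ≤ 1) :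
    0 ≤ β * (1 - α) / (α * (1 - β)) := by
  have h1β : (0:ℝ) < 1 - β := by linarith
  have : 0 ≤ 1 - α := by linarith
  positivity

lemma sfun_le_one {β α : ℝ} (hβ0 : 0 < β) (hβ1 : β < 1) (hα1 : β ≤ α) :
    β * (1 - α) / (α * (1 - β)) ≤ 1 := by
  have h1β : (0:ℝ) < 1 - β := by linarith
  have hα0 : 0 < α := lt_of_lt_of_le hβ0 hα1
  rw [div_le_one (by positivity)]
  nlinarith

lemma sfun_beta {β : ℝ} (hβ0 : 0 < β) (hβ1 : β < 1) :
    β * (1 - β) / (β * (1 - β)) = 1 := by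
  have h1β : (0:ℝ) < 1 - β := by linarith
  field_simp

lemma sfun_one {β : ℝ} : β * (1 - 1) / (1 * (1 - β)) = 0 := by norm_num

lemma cont_rpow_exp {c : ℝ} (hc : 0 ≤ c) {x : ℝ} (hx : 0 < x) :
    ContinuousAt (fun a : ℝ => c ^ a) x :=
  (Real.continuousAt_rpow (c, x) (Or.inr hx)).comp
    ((continuous_const.prodMk continuous_id).continuousAt (x := x))

lemma cont_rpow_both {f g : ℝ → ℝ} {x : ℝ} (hf : ContinuousAt f x) (hg : ContinuousAt g x)
    (hfx : f x ≠ 0) : ContinuousAt (fun a => f a ^ g a) x :=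
  Filter.Tendsto.comp (Real.continuousAt_rpow (f x, g x) (Or.inl hfx)) (hf.prodMk hg)

lemma contZ (hP : ∀ p, 0 ≤ P p) {x : ℝ} (hx : 0 < x) (y : 𝓨) :
    ContinuousAt (fun α => Zf P α y) x := by
  have : (fun α => Zf P α y) = fun α => ∑ xx, pCond P xx y ^ α := rfl
  rw [this]
  exact tendsto_finset_sum _ fun xx _ => cont_rpow_exp (pCond_nonneg P hP xx y) hx

lemma contS (hP : ∀ p, 0 ≤ P p) (β : ℝ) {x : ℝ} (hx : 0 < x) :
    ContinuousAt (fun α => Sf P β α) x := by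
  have : (fun α => Sf P β α)
      = fun α => ∑ y, (if 0 < pY P y then pY P y * Zf P α y ^ (β / α) else 0) := rfl
  rw [this]
  refine tendsto_finset_sum _ fun y _ => ?_
  by_cases h : 0 < pY P y
  · simp only [if_pos h]
    refine ContinuousAt.mul continuousAt_const ?_
    exact cont_rpow_both (contZ P hP hx y)
      (continuousAt_const.div continuousAt_id hx.ne') (Zf_pos P hP x h).ne'
  · simp only [if_neg h]
    exact continuousAt_const

lemma contPhi (hP : ∀ p, 0 ≤ P p) (hPsum : ∑ p, P p = 1) (β R : ℝ) {x : ℝ} (hx : 0 < x)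
    (hβ1 : β < 1) :
    ContinuousAt (phihat P β R) x := by
  have h1 : ContinuousAt (fun α => β * (1 - α) / (α * (1 - β)) * R) x := by
    refine ContinuousAt.mul (ContinuousAt.div ?_ ?_ ?_) continuousAt_const
    · exact continuousAt_const.mul (continuousAt_const.sub continuousAt_id)
    · exact continuousAt_id.mul continuousAt_const
    · intro hc
      have h1β : (1:ℝ) - β ≠ 0 := by intro h'; linarith
      exact hx.ne' (by
        rcases mul_eq_zero.mp hc with h | h
        · exact h
        · exact absurd h h1β)
  have h2 : ContinuousAt (fun α => 1 / (1 - β) * Real.logb 2 (Sf P β α)) x := by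
    refine ContinuousAt.mul continuousAt_const ?_
    have : (fun α => Real.logb 2 (Sf P β α)) = fun α => Real.log (Sf P β α) / Real.log 2 := rfl
    rw [this]
    exact ((Real.continuousAt_log (Sf_pos P hP hPsum β x).ne').comp (contS P hP β hx)).div
      continuousAt_const (Real.log_ne_zero_of_pos_of_ne_one (by norm_num) (by norm_num))
  exact h1.sub h2

lemma shannon_Qst (hP : ∀ p, 0 ≤ P p) (hPsum : ∑ p, P p = 1)
    {β α : ℝ} (hβ0 : 0 < β) (hβ1 : β < 1) (hα0 : 0 < α) :
    shannonCond (Qst P β α)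
      = -∑ p : 𝓧 × 𝓨, (if 0 < P p then
          Qst P β α p * Real.logb 2 (pCond P p.1 p.2 ^ α / Zf P α p.2) else 0) := by
  rw [shannonCond, neg_inj]
  refine Finset.sum_congr rfl (fun p _ => ?_)
  by_cases h : 0 < P p
  · rw [if_pos ((Qst_pos_iff P hP hPsum hβ0 hβ1 hα0 p).mpr h), if_pos h]
    have hPp' : 0 < P (p.1, p.2) := by rwa [Prod.mk.eta]
    have hpy : 0 < pY P p.2 := pY_pos P hP hPp'
    have hz : 0 < Zf P α p.2 := Zf_pos P hP α hpy
    have hS := Sf_pos P hP hPsum β α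
    have hW : 0 < Wf P β α p.2 := Wf_pos P hP β α hpy
    have hpCQ : pCond (Qst P β α) p.1 p.2 = pCond P p.1 p.2 ^ α / Zf P α p.2 := by
      rw [pCond, Prod.mk.eta, pY_Qst P hP hβ0 hβ1 hα0, if_pos hpy, Qst, if_pos hpy, Wf]
      rw [← Zf_rpow_succ P hz]
      field_simp
    rw [hpCQ]
  · rw [if_neg h, if_neg]
    intro hc
    exact h ((Qst_pos_iff P hP hPsum hβ0 hβ1 hα0 p).mp hc)

lemma contPsi (hP : ∀ p, 0 ≤ P p) (hPsum : ∑ p, P p = 1)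
    {β : ℝ} (hβ0 : 0 < β) (hβ1 : β < 1) {x : ℝ} (hx : 0 < x) :
    ContinuousAt (fun α => shannonCond (Qst P β α)) x := by
  have hev : (fun α => -∑ p : 𝓧 × 𝓨, (if 0 < P p then
      Qst P β α p * Real.logb 2 (pCond P p.1 p.2 ^ α / Zf P α p.2) else 0))
      =ᶠ[nhds x] (fun α => shannonCond (Qst P β α)) := by
    filter_upwards [isOpen_Ioi.eventually_mem (Set.mem_Ioi.mpr hx)] with α hα
    exact (shannon_Qst P hP hPsum hβ0 hβ1 hα).symm
  refine ContinuousAt.congr ?_ hev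
  refine ContinuousAt.neg ?_
  refine tendsto_finset_sum _ fun p _ => ?_
  by_cases h : 0 < P p
  · simp only [if_pos h]
    have hPp' : 0 < P (p.1, p.2) := by rwa [Prod.mk.eta]
    have hpy : 0 < pY P p.2 := pY_pos P hP hPp'
    have hpc : 0 < pCond P p.1 p.2 := pCond_pos P hP hPp'
    have hzx : 0 < Zf P x p.2 := Zf_pos P hP x hpy
    have hQc : ContinuousAt (fun α => Qst P β α p) x := by
      have heq : (fun α => Qst P β α p) = fun α =>
          pY P p.2 * Zf P α p.2 ^ (β / α - 1) * pCond P p.1 p.2 ^ α / Sf P β α :=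
        funext fun α => by rw [Qst, if_pos hpy]
      rw [heq]
      refine ContinuousAt.div ?_ (contS P hP β hx) (Sf_pos P hP hPsum β x).ne'
      refine ContinuousAt.mul ?_ (cont_rpow_exp hpc.le hx)
      refine ContinuousAt.mul continuousAt_const ?_
      exact cont_rpow_both (contZ P hP hx p.2)
        ((continuousAt_const.div continuousAt_id hx.ne').sub continuousAt_const) hzx.ne'
    refine hQc.mul ?_
    have : (fun α => Real.logb 2 (pCond P p.1 p.2 ^ α / Zf P α p.2))
        = fun α => Real.log (pCond P p.1 p.2 ^ α / Zf P α p.2) / Real.log 2 := rfl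
    rw [this]
    have harg : ContinuousAt (fun α => pCond P p.1 p.2 ^ α / Zf P α p.2) x :=
      (cont_rpow_exp hpc.le hx).div (contZ P hP hx p.2) hzx.ne'
    have hpos : pCond P p.1 p.2 ^ x / Zf P x p.2 ≠ 0 :=
      (div_pos (Real.rpow_pos_of_pos hpc x) hzx).ne'
    exact (Filter.Tendsto.comp (Real.continuousAt_log hpos) harg).div continuousAt_const
      (Real.log_ne_zero_of_pos_of_ne_one (by norm_num) (by norm_num))
  · simp only [if_neg h]
    exact continuousAt_const

-- MORE

/-- the minimax identity for the privacy-amplification exponent: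
`max_{α ∈ [β,1]} (β(1−α)/(α(1−β)))·(R − H̃_{α,β}(X|Y))`
`= min_{Q_XY ≪ P_XY} (D(Q_Y‖P_Y) + (β/(1−β))·D(Q_XY‖P_XY) + |R − H(X|Y)_Q|⁺)`. -/
theorem privacy_amplification_minimax
    [Nonempty 𝓧] [Nonempty 𝓨]
    (P : 𝓧 × 𝓨 → ℝ) (hP : ∀ p, 0 ≤ P p) (hPsum : ∑ p, P p = 1)
    (β R : ℝ) (hβ0 : 0 < β) (hβ1 : β < 1) (hR : 0 ≤ R) :
    ∃ m : ℝ,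
      IsGreatest
        { v : ℝ | ∃ α : ℝ, β ≤ α ∧ α ≤ 1 ∧
            v = β * (1 - α) / (α * (1 - β)) * (R - HtildeE P α β) } m ∧
      IsLeast
        { v : ℝ | ∃ Q : 𝓧 × 𝓨 → ℝ,
            (∀ p, 0 ≤ Q p) ∧ (∑ p, Q p = 1) ∧ (∀ p, P p = 0 → Q p = 0) ∧
            v = relEnt (pY Q) (pY P) + β / (1 - β) * relEnt Q P +
                max (R - shannonCond Q) 0 } m := by
  classical
  have h1β : (0:ℝ) < 1 - β := by linarith
  -- maximize phihat over [β,1]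
  obtain ⟨αs, hαs, hmax⟩ := isCompact_Icc.exists_isMaxOn (Set.nonempty_Icc.mpr hβ1.le)
    (fun x hx => (contPhi P hP hPsum β R (lt_of_lt_of_le hβ0 hx.1) hβ1).continuousWithinAt)
  have hαs0 : 0 < αs := lt_of_lt_of_le hβ0 hαs.1
  set ψ : ℝ → ℝ := fun α => R - shannonCond (Qst P β α) with hψ
  set sfun : ℝ → ℝ := fun α => β * (1 - α) / (α * (1 - β)) with hsfun
  -- supergradient inequality
  have hsg : ∀ a ∈ Set.Icc β 1, ∀ b ∈ Set.Icc β 1,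
      phihat P β R a ≤ phihat P β R b + (sfun a - sfun b) * ψ b := by
    intro a ha b hb
    have hb0 : 0 < b := lt_of_lt_of_le hβ0 hb.1
    have h1 := key_ineq P hP hPsum (Qst P β b)
      (Qst_nonneg P hP hPsum hβ0 hβ1) (sum_Qst P hP hPsum hβ0 hβ1 hb0)
      (Qst_abs P hP hb0) (R := R) hβ0 hβ1 ha.1 ha.2
    have h2 := key_eq P hP hPsum (R := R) (α := b) hβ0 hβ1 hb0
    simp only [hψ, hsfun]
    nlinarith [h1, h2]
  -- continuity of ψ at points of [β,1]
  have hψcont : ∀ x : ℝ, 0 < x → ContinuousAt ψ x := by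
    intro x hx
    exact continuousAt_const.sub (contPsi P hP hPsum hβ0 hβ1 hx)
  -- claim A : if αs < 1 then 0 ≤ ψ αs
  have claimA : αs < 1 → 0 ≤ ψ αs := by
    intro hlt
    by_contra hneg
    push_neg at hneg
    have hev : ∀ᶠ b in nhds αs, ψ b < 0 :=
      (hψcont αs hαs0).eventually (eventually_lt_nhds hneg)
    have hev2 : ∀ᶠ b in nhdsWithin αs (Set.Ioi αs), b ∈ Set.Ioc αs 1 :=
      Filter.eventually_of_mem (Ioc_mem_nhdsGT_of_mem ⟨le_refl αs, hlt⟩) (fun b hb => hb)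
    obtain ⟨b, hb1, hb2⟩ := ((hev.filter_mono nhdsWithin_le_nhds).and hev2).exists
    have hbmem : b ∈ Set.Icc β 1 := ⟨le_trans hαs.1 hb2.1.le, hb2.2⟩
    have hs1 := hsg αs hαs b hbmem
    have hs2 : sfun b < sfun αs := sfun_lt hβ0 hβ1 hαs0 hb2.1
    have hs3 : phihat P β R b ≤ phihat P β R αs := hmax hbmem
    nlinarith [mul_neg_of_pos_of_neg (sub_pos.mpr hs2) hb1]
  -- claim B : if β < αs then ψ αs ≤ 0
  have claimB : β < αs → ψ αs ≤ 0 := by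
    intro hlt
    by_contra hpos
    push_neg at hpos
    have hev : ∀ᶠ b in nhds αs, 0 < ψ b :=
      (hψcont αs hαs0).eventually (eventually_gt_nhds hpos)
    have hev2 : ∀ᶠ b in nhdsWithin αs (Set.Iio αs), b ∈ Set.Ico β αs :=
      Filter.eventually_of_mem (Ico_mem_nhdsLT_of_mem ⟨hlt, le_refl αs⟩) (fun b hb => hb)
    obtain ⟨b, hb1, hb2⟩ := ((hev.filter_mono nhdsWithin_le_nhds).and hev2).exists
    have hbmem : b ∈ Set.Icc β 1 := ⟨hb2.1, le_trans hb2.2.le hαs.2⟩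
    have hb0 : 0 < b := lt_of_lt_of_le hβ0 hb2.1
    have hs1 := hsg αs hαs b hbmem
    have hs2 : sfun αs < sfun b := sfun_lt hβ0 hβ1 hb0 hb2.2
    have hs3 : phihat P β R b ≤ phihat P β R αs := hmax hbmem
    nlinarith [mul_neg_of_neg_of_pos (sub_neg.mpr hs2) hb1]
  -- the complementary-slackness identity
  have hcase : max (ψ αs) 0 = sfun αs * ψ αs := by
    rcases eq_or_lt_of_le hαs.1 with hb | hb
    · -- αs = β
      have hge : 0 ≤ ψ αs := claimA (by rw [← hb]; exact hβ1)
      have hsf : sfun αs = 1 := by rw [hsfun, ← hb]; exact sfun_beta hβ0 hβ1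
      rw [hsf, one_mul, max_eq_left hge]
    · rcases eq_or_lt_of_le hαs.2 with h1 | h1
      · -- αs = 1
        have hle : ψ αs ≤ 0 := claimB hb
        have hsf : sfun αs = 0 := by rw [hsfun, h1]; exact sfun_one
        rw [hsf, zero_mul, max_eq_right hle]
      · -- interior
        have hge : 0 ≤ ψ αs := claimA h1
        have hle : ψ αs ≤ 0 := claimB hb
        have h0 : ψ αs = 0 := le_antisymm hle hge
        rw [h0, mul_zero, max_self]
  refine ⟨phihat P β R αs, ⟨⟨αs, hαs.1, hαs.2, ?_⟩, ?_⟩, ⟨⟨Qst P β αs,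
    Qst_nonneg P hP hPsum hβ0 hβ1, sum_Qst P hP hPsum hβ0 hβ1 hαs0,
    Qst_abs P hP hαs0, ?_⟩, ?_⟩⟩
  · exact (ident P hP hPsum hβ0 hβ1 hαs.1 hαs.2).symm
  · rintro v ⟨α, ha1, ha2, rfl⟩
    rw [ident P hP hPsum hβ0 hβ1 ha1 ha2]
    exact hmax ⟨ha1, ha2⟩
  · have h2 := key_eq P hP hPsum (R := R) (α := αs) hβ0 hβ1 hαs0
    have : max (R - shannonCond (Qst P β αs)) 0 = sfun αs * ψ αs := hcase
    rw [this]
    simp only [hψ, hsfun] at h2 ⊢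
    linarith
  · rintro v ⟨Q, hQ0, hQ1, hQa, rfl⟩
    have h1 := key_ineq P hP hPsum Q hQ0 hQ1 hQa (R := R) hβ0 hβ1 hαs.1 hαs.2
    have hsh : β * (1 - αs) / (αs * (1 - β)) * (R - shannonCond Q)
        ≤ max (R - shannonCond Q) 0 := by
      rcases le_or_gt 0 (R - shannonCond Q) with h | h
      · calc β * (1 - αs) / (αs * (1 - β)) * (R - shannonCond Q)
            ≤ 1 * (R - shannonCond Q) :=
              mul_le_mul_of_nonneg_right (sfun_le_one hβ0 hβ1 hαs.1) h
          _ = R - shannonCond Q := one_mul _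
          _ ≤ max (R - shannonCond Q) 0 := le_max_left _ _
      · calc β * (1 - αs) / (αs * (1 - β)) * (R - shannonCond Q)
            ≤ 0 := mul_nonpos_of_nonneg_of_nonpos
              (sfun_nonneg hβ0 hβ1 hαs0 hαs.2) h.le
          _ ≤ max (R - shannonCond Q) 0 := le_max_right _ _
    linarith
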